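/- arXiv:1606.02192 — 4 statements merged into one kernel-verified Lean document; each statement's English description precedes it below -/
import Mathlib

section
/- Let R = M_n(F) = ⊕_{g∈G} R_g be endowed with a fine grading by a group G (i.e., dim R_g ≤ 1 for all g). Then every nonzero homogeneous element of R is invertible. -/
/-!
Let `x ∈ R_g` be nonzero and suppose it is not invertible. Since `R_1` is spanned by `1`, every
product `a x b` with `a, b` homogeneous and of total degree `1` is a scalar matrix of determinant
zero, hence vanishes. So all products `a x b` lie in `⊕_{u ≠ 1} R_u`. But `Mₙ(F)` is simple, so
`1` is a sum of such products, while `1 ∈ R_1` meets `⊕_{u ≠ 1} R_u` only in `0`.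
-/

theorem Submodule.eq_span_singleton_of_mem_of_finrank_le_one {K V : Type*} [DivisionRing K]
    [AddCommGroup V] [Module K V] [FiniteDimensional K V] {S : Submodule K V} {w : V}
    (hS : Module.finrank K S ≤ 1) (hw : w ∈ S) (hw0 : w ≠ 0) : S = K ∙ w :=
  (Submodule.eq_of_le_of_finrank_le ((Submodule.span_singleton_le_iff_mem w S).mpr hw)
    (by rwa [finrank_span_singleton hw0])).symm

theorem IsSimpleRing.one_mem_of_forall_mul_mul_mem {A : Type*} [Ring A] [IsSimpleRing A]
    {S : AddSubgroup A} {x : A} (hx : x ≠ 0) (h : ∀ a b, a * x * b ∈ S) : (1 : A) ∈ S := by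
  have h1 : (1 : A) ∈ TwoSidedIdeal.span {x} :=
    one_mem_of_ne_zero_mem _ hx (TwoSidedIdeal.subset_span rfl)
  rw [TwoSidedIdeal.mem_span_iff_mem_addSubgroup_closure] at h1
  refine (AddSubgroup.closure_le S).mpr ?_ h1
  rintro - ⟨-, ⟨a, -, x, rfl, rfl⟩, b, -, rfl⟩
  exact h a b

theorem Matrix.eq_zero_of_mem_span_one_of_det_eq_zero {ι K : Type*} [Fintype ι] [DecidableEq ι]
    [CommRing K] [NoZeroDivisors K] {y : Matrix ι ι K} (hy : y ∈ K ∙ (1 : Matrix ι ι K))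
    (hdet : y.det = 0) : y = 0 := by
  obtain ⟨c, rfl⟩ := Submodule.mem_span_singleton.mp hy
  cases isEmpty_or_nonempty ι
  · exact Subsingleton.elim _ _
  · rw [det_smul, det_one, mul_one] at hdet
    rw [pow_eq_zero_iff Fintype.card_ne_zero |>.mp hdet, zero_smul]

theorem mul_mul_mem_iSup_ne_one {R A G : Type*} [Semiring R] [Semiring A] [Module R A] [Group G]
    (ℛ : G → Submodule R A) (htop : iSup ℛ = ⊤)
    (hmul : ∀ (g h : G) (x y : A), x ∈ ℛ g → y ∈ ℛ h → x * y ∈ ℛ (g * h))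
    {g : G} {x : A} (hx : x ∈ ℛ g)
    (hzero : ∀ (u v : G) (a b : A), a ∈ ℛ u → b ∈ ℛ v → u * g * v = 1 → a * x * b = 0)
    (a b : A) : a * x * b ∈ ⨆ (u : G) (_ : u ≠ 1), ℛ u := by
  set J := ⨆ (u : G) (_ : u ≠ 1), ℛ u
  have hhom : ∀ u v a b, a ∈ ℛ u → b ∈ ℛ v → a * x * b ∈ J := by
    intro u v a b ha hb
    by_cases huv : u * g * v = 1
    · rw [hzero u v a b ha hb huv]
      exact J.zero_mem
    · exact Submodule.mem_iSup_of_mem (u * g * v)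
        (Submodule.mem_iSup_of_mem huv (hmul _ _ _ _ (hmul _ _ _ _ ha hx) hb))
  have hmem : ∀ y : A, y ∈ iSup ℛ := fun y => htop ▸ Submodule.mem_top
  have hhom_left : ∀ u a, a ∈ ℛ u → ∀ b, a * x * b ∈ J := fun u a ha b =>
    Submodule.iSup_induction ℛ (motive := fun b => a * x * b ∈ J) (hmem b)
      (fun v b hb => hhom u v a b ha hb) (by simp)
      (fun b b' hb hb' => by simpa [mul_add] using J.add_mem hb hb')
  exact Submodule.iSup_induction ℛ (motive := fun a => a * x * b ∈ J) (hmem a)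
    (fun u a ha => hhom_left u a ha b) (by simp)
    (fun a a' ha ha' => by simpa [add_mul] using J.add_mem ha ha')

/-- in a fine grading of `Mₙ(F)` by a group `G` (all homogeneous
components of dimension at most 1), every nonzero homogeneous element is invertible. -/
theorem fine_grading_homogeneous_invertible {F : Type*} [Field F] {G : Type*} [Group G]
    [DecidableEq G] {n : ℕ} (ℛ : G → Submodule F (Matrix (Fin n) (Fin n) F))
    (hdecomp : DirectSum.IsInternal ℛ)
    (hone : (1 : Matrix (Fin n) (Fin n) F) ∈ ℛ 1)
    (hmulmem : ∀ (g h : G) (x y : Matrix (Fin n) (Fin n) F),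
      x ∈ ℛ g → y ∈ ℛ h → x * y ∈ ℛ (g * h))
    (hfine : ∀ g : G, Module.finrank F (ℛ g) ≤ 1) :
    ∀ g : G, ∀ x ∈ ℛ g, x ≠ 0 → IsUnit x := by
  intro g x hx hx0
  have : Nonempty (Fin n) := by
    by_contra h
    exact hx0 (Matrix.ext fun i => (h ⟨i⟩).elim)
  by_contra hunit
  have hdet : x.det = 0 := by
    rwa [Matrix.isUnit_iff_isUnit_det, isUnit_iff_ne_zero, not_not] at hunit
  have hR1 : ℛ 1 = F ∙ 1 :=
    Submodule.eq_span_singleton_of_mem_of_finrank_le_one (hfine 1) hone one_ne_zero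
  have hsandwich := mul_mul_mem_iSup_ne_one ℛ hdecomp.submodule_iSup_eq_top hmulmem hx
    fun u v a b ha hb huv => by
      have hmem := hmulmem _ _ _ _ (hmulmem _ _ _ _ ha hx) hb
      rw [huv, hR1] at hmem
      exact Matrix.eq_zero_of_mem_span_one_of_det_eq_zero hmem (by simp [Matrix.det_mul, hdet])
  have hone_mem := IsSimpleRing.one_mem_of_forall_mul_mul_mem
    (S := (⨆ (u : G) (_ : u ≠ 1), ℛ u).toAddSubgroup) hx0 hsandwich
  exact one_ne_zero (Submodule.disjoint_def.mp (hdecomp.submodule_iSupIndep 1) 1 hone hone_mem)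
end

section
/- Let R = M_n(F) = ⊕_{g∈G} R_g be endowed with a fine grading by a group G. Then the support {g ∈ G : R_g ≠ 0} is a subgroup of G. -/
/-!
Let `x ∈ ℛ g` be nonzero. As `Mₙ(F)` is simple, the two-sided ideal generated by `x` contains `1`,
whose component of degree `1` is `1 ≠ 0`; expanding in homogeneous components, some product
`a * x * b` with `a ∈ ℛ h`, `b ∈ ℛ h'` and `h * g * h' = 1` is nonzero. It lies in
`ℛ 1 = F • 1`, so it is a nonzero scalar and `x` is invertible. Hence products of nonzero
homogeneous elements are nonzero, so the support is closed under multiplication, and it contains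
`g⁻¹ = h' * h`.
-/

open DirectSum Module

namespace TwoSidedIdeal

variable {A B : Type*} [Ring A] [AddCommGroup B]

def kerCore (f : A →+ B) : TwoSidedIdeal A :=
  mk' {y | ∀ a b, f (a * y * b) = 0} (by simp)
    (fun hx hy a b => by simp [mul_add, add_mul, hx a b, hy a b])
    (fun hx a b => by simp [hx a b])
    (fun {x _} hy a b => by simpa [mul_assoc] using hy (a * x) b)
    (fun {_ y} hx a b => by simpa [mul_assoc] using hx a (y * b))

theorem mem_kerCore {f : A →+ B} {y : A} : y ∈ kerCore f ↔ ∀ a b, f (a * y * b) = 0 :=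
  mem_mk' ..

end TwoSidedIdeal

open TwoSidedIdeal in
theorem IsSimpleRing.exists_map_mul_mul_ne_zero {A B : Type*} [Ring A] [IsSimpleRing A]
    [AddCommGroup B] (f : A →+ B) (hf : f 1 ≠ 0) {x : A} (hx : x ≠ 0) :
    ∃ a b, f (a * x * b) ≠ 0 := by
  have hbot : kerCore f = ⊥ := (IsSimpleOrder.eq_bot_or_eq_top _).resolve_right fun htop => by
    have h1 : (1 : A) ∈ kerCore f := htop ▸ mem_top ..
    exact hf (by simpa using mem_kerCore.1 h1 1 1)
  by_contra! h
  exact hx ((mem_bot A).1 (hbot ▸ mem_kerCore.2 h))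

theorem Submodule.exists_smul_eq_of_finrank_le_one {K V : Type*} [Field K] [AddCommGroup V]
    [Module K V] {p : Submodule K V} [FiniteDimensional K p] (hp : finrank K p ≤ 1)
    {v w : V} (hv : v ∈ p) (hv0 : v ≠ 0) (hw : w ∈ p) : ∃ c : K, c • v = w := by
  have hpos : 0 < finrank K p := finrank_pos_iff_exists_ne_zero.2 ⟨⟨v, hv⟩, by simpa using hv0⟩
  obtain ⟨c, hc⟩ := (finrank_eq_one_iff_of_nonzero' (⟨v, hv⟩ : p) (by simpa using hv0)).1
    (le_antisymm hp hpos) ⟨w, hw⟩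
  exact ⟨c, congrArg Subtype.val hc⟩

namespace DirectSum

section Decomposition

variable {ι A σ : Type*} [DecidableEq ι] [Ring A] [SetLike σ A] [AddSubmonoidClass σ A]
  (ℛ : ι → σ) [Decomposition ℛ]

def componentProj (i : ι) : A →+ A :=
  (AddSubmonoidClass.subtype (ℛ i)).comp <|
    (DFinsupp.evalAddMonoidHom i).comp (decomposeAddEquiv ℛ).toAddMonoidHom

theorem componentProj_apply (i : ι) (x : A) : componentProj ℛ i x = decompose ℛ x i := rfl

theorem map_mul_mul_eq_zero_of_homogeneous {B : Type*} [AddCommMonoid B] (f : A →+ B) {x : A}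
    (h : ∀ i j, ∀ a ∈ ℛ i, ∀ b ∈ ℛ j, f (a * x * b) = 0) (a b : A) : f (a * x * b) = 0 := by
  induction a using Decomposition.inductionOn ℛ with
  | zero => simp
  | homogeneous a =>
    induction b using Decomposition.inductionOn ℛ with
    | zero => simp
    | homogeneous b => exact h _ _ _ a.2 _ b.2
    | add b b' hb hb' => simp [mul_add, hb, hb']
  | add a a' ha ha' => simp [add_mul, ha, ha']

end Decomposition

section GroupGraded

variable {G A σ : Type*} [Group G] [DecidableEq G] [Ring A] [IsSimpleRing A] [SetLike σ A]
  [AddSubmonoidClass σ A] (ℛ : G → σ) [Decomposition ℛ]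

theorem exists_mul_mul_ne_zero_of_mem (hone : (1 : A) ∈ ℛ 1)
    (hmul : ∀ (g h : G) (x y : A), x ∈ ℛ g → y ∈ ℛ h → x * y ∈ ℛ (g * h))
    {g : G} {x : A} (hxg : x ∈ ℛ g) (hx : x ≠ 0) :
    ∃ (h h' : G) (a b : A), a ∈ ℛ h ∧ b ∈ ℛ h' ∧ h * g * h' = 1 ∧ a * x * b ≠ 0 := by
  by_contra! hcon
  have hproj_one : componentProj ℛ 1 1 ≠ 0 := by
    rw [componentProj_apply, decompose_of_mem_same ℛ hone]
    exact one_ne_zero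
  obtain ⟨a, b, hab⟩ := IsSimpleRing.exists_map_mul_mul_ne_zero _ hproj_one hx
  refine hab (map_mul_mul_eq_zero_of_homogeneous ℛ _ (fun h h' a ha b hb => ?_) a b)
  by_cases hdeg : h * g * h' = 1
  · simp [hcon h h' a b ha hb hdeg]
  · exact decompose_of_mem_ne ℛ (hmul _ _ _ _ (hmul _ _ _ _ ha hxg) hb) hdeg

end GroupGraded

end DirectSum

namespace FineGrading

variable {F A G : Type*} [Field F] [Ring A] [Algebra F A] [IsSimpleRing A]
  [FiniteDimensional F A] [IsDedekindFiniteMonoid A] [Group G] [DecidableEq G]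
  (ℛ : G → Submodule F A) [Decomposition ℛ]
  (hone : (1 : A) ∈ ℛ 1)
  (hmul : ∀ (g h : G) (x y : A), x ∈ ℛ g → y ∈ ℛ h → x * y ∈ ℛ (g * h))
  (hfine : finrank F (ℛ 1) ≤ 1)
include hone hmul hfine

theorem isUnit_of_mem {g : G} {x : A} (hxg : x ∈ ℛ g)
    (hx : x ≠ 0) : IsUnit x := by
  obtain ⟨h, h', a, b, ha, hb, hdeg, hab⟩ := exists_mul_mul_ne_zero_of_mem ℛ hone hmul hxg hx
  have hab_mem : a * x * b ∈ ℛ 1 := hdeg ▸ hmul _ _ _ _ (hmul _ _ _ _ ha hxg) hb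
  obtain ⟨c, hc⟩ := Submodule.exists_smul_eq_of_finrank_le_one hfine hone one_ne_zero hab_mem
  have hc0 : c ≠ 0 := by rintro rfl; exact hab (by simp [← hc])
  have hinv : (c⁻¹ • a) * (x * b) = 1 := by
    rw [smul_mul_assoc, ← mul_assoc, ← hc, smul_smul, inv_mul_cancel₀ hc0, one_smul]
  exact isUnit_of_mul_isUnit_left (IsUnit.of_mul_eq_one_right _ hinv)

theorem mul_ne_bot {g h : G} (hg : ℛ g ≠ ⊥) (hh : ℛ h ≠ ⊥) :
    ℛ (g * h) ≠ ⊥ := by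
  obtain ⟨x, hxg, hx⟩ := (Submodule.ne_bot_iff _).1 hg
  obtain ⟨y, hyh, hy⟩ := (Submodule.ne_bot_iff _).1 hh
  refine (Submodule.ne_bot_iff _).2 ⟨x * y, hmul _ _ _ _ hxg hyh, ?_⟩
  rwa [Ne, (isUnit_of_mem ℛ hone hmul hfine hxg hx).mul_right_eq_zero]

theorem inv_ne_bot {g : G} (hg : ℛ g ≠ ⊥) : ℛ g⁻¹ ≠ ⊥ := by
  obtain ⟨x, hxg, hx⟩ := (Submodule.ne_bot_iff _).1 hg
  obtain ⟨h, h', a, b, ha, hb, hdeg, hab⟩ := exists_mul_mul_ne_zero_of_mem ℛ hone hmul hxg hx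
  have hinv : h' * h = g⁻¹ := by
    rw [eq_inv_of_mul_eq_one_right hdeg]
    group
  rw [← hinv]
  refine mul_ne_bot ℛ hone hmul hfine ((Submodule.ne_bot_iff _).2 ⟨b, hb, ?_⟩)
    ((Submodule.ne_bot_iff _).2 ⟨a, ha, ?_⟩) <;> rintro rfl <;> simp at hab

theorem exists_subgroup_iff_ne_bot :
    ∃ H : Subgroup G, ∀ g : G, g ∈ H ↔ ℛ g ≠ ⊥ :=
  ⟨{ carrier := {g | ℛ g ≠ ⊥}
     one_mem' := (Submodule.ne_bot_iff _).2 ⟨1, hone, one_ne_zero⟩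
     mul_mem' := mul_ne_bot ℛ hone hmul hfine
     inv_mem' := inv_ne_bot ℛ hone hmul hfine }, fun _ => Iff.rfl⟩

end FineGrading

/-- in a fine grading of `Mₙ(F)`, `n ≥ 1`, by a group `G`,
the support `{g : ℛ g ≠ 0}` is a subgroup of `G`. -/
theorem fine_grading_support_subgroup {F : Type*} [Field F] {G : Type*} [Group G]
    [DecidableEq G] {n : ℕ} (hn : 0 < n) (ℛ : G → Submodule F (Matrix (Fin n) (Fin n) F))
    (hdecomp : DirectSum.IsInternal ℛ)
    (hone : (1 : Matrix (Fin n) (Fin n) F) ∈ ℛ 1)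
    (hmulmem : ∀ (g h : G) (x y : Matrix (Fin n) (Fin n) F),
      x ∈ ℛ g → y ∈ ℛ h → x * y ∈ ℛ (g * h))
    (hfine : ∀ g : G, Module.finrank F (ℛ g) ≤ 1) :
    ∃ H : Subgroup G, ∀ g : G, g ∈ H ↔ ℛ g ≠ ⊥ := by
  have : Nonempty (Fin n) := ⟨⟨0, hn⟩⟩
  let := hdecomp.chooseDecomposition
  exact FineGrading.exists_subgroup_iff_ne_bot ℛ hone hmulmem (hfine 1)
end

section
/- Let UT_n(F) carry the elementary G-grading defined by (g_1,...,g_n) (so e_{ij}, i ≤ j, has degree g_i^{-1} g_j). Then the involution ∘ (reflection along the secondary diagonal) is degree-inverting, i.e., (R_g)^∘ ⊆ R_{g^{-1}} for all g ∈ G, if and only if g_1^{-1} g_n = g_2^{-1} g_{n-1} = ... = g_n^{-1} g_1. -/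
/-!
Since `e_{ij}^∘ = e_{j',i'}` with `k' = n + 1 - k`, the involution is degree-inverting exactly
when `g_{j'}⁻¹ g_{i'} = (g_i⁻¹ g_j)⁻¹` for all `i ≤ j`, and in an abelian group this rearranges
to `g_i⁻¹ g_{i'} = g_j⁻¹ g_{j'}`. Necessity is tested on the matrix units `e_{ij}`; sufficiency
is checked entrywise, since a homogeneous matrix of degree `a` is supported on entries of degree `a`.
-/

open Matrix

/-- The anti-diagonal permutation matrix `S = Σᵢ e_{i, n+1-i}`. -/
def antiDiag (F : Type*) [Field F] (n : ℕ) : Matrix (Fin n) (Fin n) F :=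
  Matrix.of fun i j => if j = i.rev then 1 else 0

/-- The reflection along the secondary diagonal: `A∘ = S Aᵗ S`. -/
def circ {F : Type*} [Field F] {n : ℕ} (A : Matrix (Fin n) (Fin n) F) :
    Matrix (Fin n) (Fin n) F :=
  antiDiag F n * Aᵀ * antiDiag F n

section AntiDiag

variable {F : Type*} [Field F] {n : ℕ}

lemma antiDiag_mul (B : Matrix (Fin n) (Fin n) F) (i j : Fin n) :
    (antiDiag F n * B) i j = B i.rev j := by
  simp [antiDiag, mul_apply]

lemma mul_antiDiag (B : Matrix (Fin n) (Fin n) F) (i j : Fin n) :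
    (B * antiDiag F n) i j = B i j.rev := by
  have rev_eq_iff : ∀ k : Fin n, j = k.rev ↔ k = j.rev := fun k => by
    rw [eq_comm, Fin.rev_eq_iff]
  simp [antiDiag, mul_apply, rev_eq_iff]

lemma circ_apply (A : Matrix (Fin n) (Fin n) F) (i j : Fin n) :
    circ A i j = A j.rev i.rev := by
  rw [circ, mul_antiDiag, antiDiag_mul, transpose_apply]

end AntiDiag

lemma inv_mul_rev_eq_inv_iff {G : Type*} [CommGroup G] {n : ℕ} (g : Fin n → G) (i j : Fin n) :
    (g j.rev)⁻¹ * g i.rev = ((g i)⁻¹ * g j)⁻¹ ↔ (g i)⁻¹ * g i.rev = (g j)⁻¹ * g j.rev := by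
  simp only [inv_mul_eq_div, inv_div, div_eq_div_iff_mul_eq_mul]
  rw [mul_comm (g j.rev)]

lemma inv_mul_rev_eq_of_circ_degree_inverting {F : Type*} [Field F] {G : Type*} [CommGroup G]
    {n : ℕ} (g : Fin n → G)
    (h : ∀ (a : G) (A : Matrix (Fin n) (Fin n) F), A.BlockTriangular id →
        (∀ i j : Fin n, (g i)⁻¹ * g j ≠ a → A i j = 0) →
        ∀ i j : Fin n, (g i)⁻¹ * g j ≠ a⁻¹ → circ A i j = 0)
    {i j : Fin n} (hij : i ≤ j) :
    (g i)⁻¹ * g i.rev = (g j)⁻¹ * g j.rev := by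
  have single_homogeneous : ∀ p q : Fin n, (g p)⁻¹ * g q ≠ (g i)⁻¹ * g j →
      single i j (1 : F) p q = 0 := by
    rintro p q hpq
    rw [single_apply_of_ne]
    rintro ⟨rfl, rfl⟩
    exact hpq rfl
  rw [← inv_mul_rev_eq_inv_iff]
  by_contra hdeg
  have := h _ _ (blockTriangular_single hij 1) single_homogeneous j.rev i.rev hdeg
  simp [circ_apply] at this

theorem statement14_general {F : Type*} [Field F] {G : Type*} [CommGroup G]
    {n : ℕ} (g : Fin n → G) :
    (∀ (a : G) (A : Matrix (Fin n) (Fin n) F), A.BlockTriangular id →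
        (∀ i j : Fin n, (g i)⁻¹ * g j ≠ a → A i j = 0) →
        ∀ i j : Fin n, (g i)⁻¹ * g j ≠ a⁻¹ → circ A i j = 0) ↔
      ∀ i j : Fin n, (g i)⁻¹ * g i.rev = (g j)⁻¹ * g j.rev := by
  constructor
  · intro h i j
    rcases le_total i j with hij | hji
    · exact inv_mul_rev_eq_of_circ_degree_inverting g h hij
    · exact (inv_mul_rev_eq_of_circ_degree_inverting g h hji).symm
  · intro hconst a A _ hA i j hdeg
    rw [circ_apply]
    by_contra hne
    have hsupp : (g j.rev)⁻¹ * g i.rev = a := not_not.mp (mt (hA j.rev i.rev) hne)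
    apply hdeg
    rw [← hsupp, (inv_mul_rev_eq_inv_iff g i j).mpr (hconst i j), inv_inv]

/-- with the elementary `G`-grading on `UTₙ(F)` defined by
`(g₁,…,gₙ)`, the involution `∘` is degree-inverting iff
`g₁⁻¹gₙ = g₂⁻¹g_{n-1} = ⋯ = gₙ⁻¹g₁`. -/
theorem statement14 {F : Type*} [Field F] {G : Type*} [CommGroup G]
    {n : ℕ} (hn : 0 < n) (g : Fin n → G) :
    (∀ (a : G) (A : Matrix (Fin n) (Fin n) F), A.BlockTriangular id →
        (∀ i j : Fin n, (g i)⁻¹ * g j ≠ a → A i j = 0) →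
        ∀ i j : Fin n, (g i)⁻¹ * g j ≠ a⁻¹ → circ A i j = 0) ↔
      ∀ i j : Fin n, (g i)⁻¹ * g i.rev = (g j)⁻¹ * g j.rev :=
  statement14_general g
end

section
/- Let m be a positive integer, let * be either ∘ or s, and let D = [[I_m, Y],[0, Z]] ∈ UT_{2m}(F) be invertible with D^* = D, where Y and Z are m×m blocks and Z is upper triangular. Then C = [[I_m, (1/2)Y],[0, Z]] satisfies C C^* = D. -/
open Matrix

/-- `J = diag(I_m, -I_m)` in `M_{2m}(F)`. -/
def Jmat (F : Type*) [Field F] (m : ℕ) : Matrix (Fin (m + m)) (Fin (m + m)) F :=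
  Matrix.diagonal fun i => if (i : ℕ) < m then 1 else -1

/-- The involution `A ↦ Aˢ = J A∘ J` on `UT_{2m}(F)`. -/
def sInv {F : Type*} [Field F] {m : ℕ} (A : Matrix (Fin (m + m)) (Fin (m + m)) F) :
    Matrix (Fin (m + m)) (Fin (m + m)) F :=
  Jmat F m * circ A * Jmat F m

/-- The `2m × 2m` matrix `[[I_m, Y],[0, Z]]` built from `m × m` blocks. -/
def blockMat {F : Type*} [Field F] {m : ℕ} (Y Z : Matrix (Fin m) (Fin m) F) :
    Matrix (Fin (m + m)) (Fin (m + m)) F :=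
  Matrix.reindex finSumFinEquiv finSumFinEquiv (Matrix.fromBlocks 1 Y 0 Z)

section Aux

variable {F : Type*} [Field F] {m n : ℕ}

lemma myReindex_mul (A B : Matrix (Fin m ⊕ Fin m) (Fin m ⊕ Fin m) F) :
    Matrix.reindex finSumFinEquiv finSumFinEquiv A *
      Matrix.reindex finSumFinEquiv finSumFinEquiv B =
    Matrix.reindex finSumFinEquiv finSumFinEquiv (A * B) := by
  simp only [Matrix.reindex_apply]
  exact Matrix.submatrix_mul_equiv A B _ _ _

lemma myAntiDiag_block :
    antiDiag F (m + m) = Matrix.reindex finSumFinEquiv finSumFinEquiv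
      (Matrix.fromBlocks 0 (antiDiag F m) (antiDiag F m) 0) := by
  ext i j
  simp only [Matrix.reindex_apply, Matrix.submatrix_apply]
  obtain ⟨x, rfl⟩ := finSumFinEquiv.surjective i
  obtain ⟨y, rfl⟩ := finSumFinEquiv.surjective j
  simp only [Equiv.symm_apply_apply]
  rcases x with a | a <;> rcases y with b | b <;> have ha := a.isLt <;> have hb := b.isLt <;>
    simp only [antiDiag, Matrix.of_apply, finSumFinEquiv_apply_left,
      finSumFinEquiv_apply_right, Matrix.fromBlocks_apply₁₁, Matrix.fromBlocks_apply₁₂,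
      Matrix.fromBlocks_apply₂₁, Matrix.fromBlocks_apply₂₂, Matrix.zero_apply,
      Fin.ext_iff, Fin.val_rev, Fin.coe_castAdd, Fin.coe_natAdd, Fin.coe_addNat] <;>
    split_ifs <;> first | rfl | omega

lemma myJmat_block :
    Jmat F m = Matrix.reindex finSumFinEquiv finSumFinEquiv
      (Matrix.fromBlocks 1 0 0 (-1)) := by
  ext i j
  simp only [Matrix.reindex_apply, Matrix.submatrix_apply]
  obtain ⟨x, rfl⟩ := finSumFinEquiv.surjective i
  obtain ⟨y, rfl⟩ := finSumFinEquiv.surjective j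
  simp only [Equiv.symm_apply_apply]
  rcases x with a | a <;> rcases y with b | b <;> have ha := a.isLt <;> have hb := b.isLt <;>
    simp only [Jmat, Matrix.diagonal_apply, finSumFinEquiv_apply_left,
      finSumFinEquiv_apply_right, Matrix.fromBlocks_apply₁₁, Matrix.fromBlocks_apply₁₂,
      Matrix.fromBlocks_apply₂₁, Matrix.fromBlocks_apply₂₂, Matrix.zero_apply,
      Matrix.one_apply, Matrix.neg_apply, Fin.ext_iff, Fin.val_rev, Fin.coe_castAdd,
      Fin.coe_natAdd, Fin.coe_addNat] <;>
    split_ifs <;> first | rfl | omega | simp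

lemma myAntiDiag_sq : antiDiag F n * antiDiag F n = 1 := by
  ext i j
  simp only [Matrix.mul_apply, antiDiag, Matrix.of_apply, ite_mul, one_mul, zero_mul,
    Finset.sum_ite_eq', Finset.mem_univ, if_true, Matrix.one_apply]
  by_cases h : j = i.rev.rev
  · simp [h, Fin.rev_rev]
  · rw [if_neg h, if_neg (fun hh => h (by rw [Fin.rev_rev]; exact hh.symm))]

lemma myAntiDiag_transpose : (antiDiag F n)ᵀ = antiDiag F n := by
  ext i j
  simp only [Matrix.transpose_apply, antiDiag, Matrix.of_apply]
  by_cases h : j = i.rev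
  · rw [if_pos (by rw [h, Fin.rev_rev]), if_pos h]
  · rw [if_neg (fun hh => h (by rw [hh, Fin.rev_rev])), if_neg h]

lemma myCirc_one : circ (1 : Matrix (Fin n) (Fin n) F) = 1 := by
  simp [circ, myAntiDiag_sq]

lemma myCirc_zero : circ (0 : Matrix (Fin n) (Fin n) F) = 0 := by
  simp [circ]

lemma myCirc_smul (c : F) (A : Matrix (Fin n) (Fin n) F) :
    circ (c • A) = c • circ A := by
  simp [circ, Matrix.transpose_smul, Matrix.mul_smul, Matrix.smul_mul]

lemma myCirc_reblock (A B C D : Matrix (Fin m) (Fin m) F) :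
    circ (Matrix.reindex finSumFinEquiv finSumFinEquiv (Matrix.fromBlocks A B C D)) =
    Matrix.reindex finSumFinEquiv finSumFinEquiv
      (Matrix.fromBlocks (circ D) (circ B) (circ C) (circ A)) := by
  rw [circ, myAntiDiag_block]
  rw [show (Matrix.reindex finSumFinEquiv finSumFinEquiv (Matrix.fromBlocks A B C D))ᵀ
      = Matrix.reindex finSumFinEquiv finSumFinEquiv (Matrix.fromBlocks A B C D)ᵀ from rfl]
  rw [myReindex_mul, myReindex_mul]
  congr 1
  simp [Matrix.fromBlocks_transpose, Matrix.fromBlocks_multiply, circ,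
    Matrix.mul_assoc]

lemma mySInv_reblock (A B C D : Matrix (Fin m) (Fin m) F) :
    sInv (Matrix.reindex finSumFinEquiv finSumFinEquiv (Matrix.fromBlocks A B C D)) =
    Matrix.reindex finSumFinEquiv finSumFinEquiv
      (Matrix.fromBlocks (circ D) (-(circ B)) (-(circ C)) (circ A)) := by
  rw [sInv, myCirc_reblock, myJmat_block, myReindex_mul, myReindex_mul]
  congr 1
  simp [Matrix.fromBlocks_multiply]

lemma myReindex_inj (A B : Matrix (Fin m ⊕ Fin m) (Fin m ⊕ Fin m) F)
    (h : Matrix.reindex finSumFinEquiv finSumFinEquiv A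
       = Matrix.reindex finSumFinEquiv finSumFinEquiv B) : A = B :=
  (Matrix.reindex finSumFinEquiv finSumFinEquiv).injective h

lemma myHalf_add (hchar : (2 : F) ≠ 0) : (1 / 2 : F) + 1 / 2 = 1 := by
  rw [← add_div, one_add_one_eq_two, div_self hchar]

end Aux

/-- if `D = [[I_m, Y],[0,Z]] ∈ UT_{2m}(F)` is invertible with `D* = D`,
where `*` is `∘` or `s`, then `C = [[I_m, ½Y],[0,Z]]` satisfies `C C* = D`. -/
theorem statement16 {F : Type*} [Field F] (hchar : (2 : F) ≠ 0) {m : ℕ}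
    (Y Z : Matrix (Fin m) (Fin m) F) (hZ : Z.BlockTriangular id)
    (star : Matrix (Fin (m + m)) (Fin (m + m)) F → Matrix (Fin (m + m)) (Fin (m + m)) F)
    (hstar : (∀ A, star A = circ A) ∨ (∀ A, star A = sInv A))
    (hD : IsUnit (blockMat Y Z)) (hsym : star (blockMat Y Z) = blockMat Y Z) :
    blockMat ((1 / 2 : F) • Y) Z * star (blockMat ((1 / 2 : F) • Y) Z) = blockMat Y Z := by
  have hYhalf : (2⁻¹ : F) • Y + (2⁻¹ : F) • Y = Y := by
    rw [← add_smul]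
    rw [show (2⁻¹ : F) + 2⁻¹ = 1 by
      rw [← one_div, ← add_div, one_add_one_eq_two, div_self hchar]]
    rw [one_smul]
  rcases hstar with h | h
  · rw [h] at hsym ⊢
    rw [blockMat, myCirc_reblock, myCirc_one, myCirc_zero] at hsym
    obtain ⟨-, hY, -, hZ1⟩ := Matrix.fromBlocks_inj.mp (myReindex_inj _ _ hsym)
    subst hZ1
    rw [blockMat, myCirc_reblock, myCirc_one, myCirc_zero, myCirc_smul, hY,
      myReindex_mul]
    rw [blockMat]
    congr 1
    simp [Matrix.fromBlocks_multiply, one_div, hYhalf]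
  · rw [h] at hsym ⊢
    rw [blockMat, mySInv_reblock, myCirc_one, myCirc_zero] at hsym
    obtain ⟨-, hY, -, hZ1⟩ := Matrix.fromBlocks_inj.mp (myReindex_inj _ _ hsym)
    subst hZ1
    have hY' : circ Y = -Y := neg_eq_iff_eq_neg.mp hY
    rw [blockMat, mySInv_reblock, myCirc_one, myCirc_zero, myCirc_smul, hY',
      myReindex_mul]
    rw [blockMat]
    congr 1
    simp [Matrix.fromBlocks_multiply, smul_neg, one_div, hYhalf]
end
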